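/- arXiv:1110.4880 — 4 statements merged into one kernel-verified Lean document; each statement's English description precedes it below -/
import Mathlib

section
/- Let f ∈ L^Q([a,b], ν) where ν is a finite Borel measure on [a,b] and the map p ↦ |f|_p (the L^p(μ) norm of a fixed measurable function f on T) is ν-integrable to the Q-th power. If E_n is a decreasing sequence of measurable subsets of T with μ(⋂_n E_n) = 0, then the IGLS norms (∫_{[a,b]} |f·1_{E_n}|_p^Q ν(dp))^{1/Q} converge to 0 as n → ∞. -/
open MeasureTheory Real Set Filter

/-- The L^p norm (as a real number) of a real-valued function. -/
noncomputable def lpNorm {T : Type*} [MeasurableSpace T] (μ : Measure T) (p : ℝ) (f : T → ℝ) : ℝ :=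
  (∫ t, |f t| ^ p ∂μ) ^ (1 / p)

/-- the absolutely continuous norm (ACN) property of the Integral Grand
Lebesgue Space: if E_n decreases with μ(⋂ E_n) = 0, then the IGLS norms of f·1_{E_n}
tend to 0. -/
theorem stmt2 {T : Type*} [MeasurableSpace T] (μ : Measure T) [SigmaFinite μ]
    (a b Q : ℝ) (ha : 1 ≤ a) (hab : a < b) (hQ : 1 ≤ Q)
    (ν : Measure ℝ) [IsFiniteMeasure ν]
    (f : T → ℝ) (hf : Measurable f)
    (hfp : ∀ p ∈ Set.Icc a b, Integrable (fun t => |f t| ^ p) μ)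
    (hint : IntegrableOn (fun p => (lpNorm μ p f) ^ Q) (Set.Icc a b) ν)
    (E : ℕ → Set T) (hE : ∀ n, MeasurableSet (E n))
    (hdec : ∀ n, E (n + 1) ⊆ E n)
    (hcap : μ (⋂ n, E n) = 0) :
    Tendsto
      (fun n => (∫ p in Set.Icc a b,
          (lpNorm μ p (fun t => f t * (E n).indicator (fun _ => (1 : ℝ)) t)) ^ Q ∂ν) ^ (1 / Q))
      atTop (nhds 0) := by
  have hQ0 : (0:ℝ) < Q := lt_of_lt_of_le one_pos hQ
  have ha0 : (0:ℝ) < a := lt_of_lt_of_le one_pos ha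
  have hanti : Antitone E := antitone_nat_of_succ_le hdec
  set g : ℕ → T → ℝ := fun n t => f t * (E n).indicator (fun _ => (1:ℝ)) t with hgdef
  -- positivity of exponents in [a,b]
  have hppos : ∀ p ∈ Set.Icc a b, (0:ℝ) < p := fun p hp => lt_of_lt_of_le ha0 hp.1
  -- key pointwise identity
  have hkey : ∀ (n : ℕ) (p : ℝ), 0 < p → ∀ t,
      |g n t| ^ p = (E n).indicator (fun t => |f t| ^ p) t := by
    intro n p hp t
    by_cases ht : t ∈ E n
    · simp [hgdef, Set.indicator_of_mem ht]
    · simp [hgdef, Set.indicator_of_notMem ht, Real.zero_rpow hp.ne']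
  have hIa : Integrable (fun t => |f t| ^ a) μ := hfp a ⟨le_rfl, hab.le⟩
  have hIb : Integrable (fun t => |f t| ^ b) μ := hfp b ⟨hab.le, le_rfl⟩
  -- integrability of |g n|^p
  have hgint : ∀ (n : ℕ) (p : ℝ), p ∈ Set.Icc a b → Integrable (fun t => |g n t| ^ p) μ := by
    intro n p hp
    have : Integrable ((E n).indicator (fun t => |f t| ^ p)) μ :=
      (hfp p hp).indicator (hE n)
    exact this.congr (Filter.Eventually.of_forall fun t => (hkey n p (hppos p hp) t).symm)
  -- rewrite integral
  have hIeq : ∀ (n : ℕ) (p : ℝ), p ∈ Set.Icc a b →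
      (∫ t, |g n t| ^ p ∂μ) = ∫ t in E n, |f t| ^ p ∂μ := by
    intro n p hp
    rw [← integral_indicator (hE n)]
    exact integral_congr_ae (Filter.Eventually.of_forall (hkey n p (hppos p hp)))
  -- pointwise (in p) convergence of the set integrals to 0
  have htend0 : ∀ p ∈ Set.Icc a b,
      Tendsto (fun n => ∫ t, |g n t| ^ p ∂μ) atTop (nhds 0) := by
    intro p hp
    have hp0 := hppos p hp
    have hI := hfp p hp
    have hlim : Tendsto (fun n => ∫ t, (E n).indicator (fun t => |f t| ^ p) t ∂μ) atTop
        (nhds (∫ t, (⋂ n, E n).indicator (fun t => |f t| ^ p) t ∂μ)) := by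
      apply tendsto_integral_of_dominated_convergence (fun t => |f t| ^ p)
      · intro n; exact hI.aestronglyMeasurable.indicator (hE n)
      · exact hI
      · intro n
        refine Filter.Eventually.of_forall fun t => ?_
        by_cases ht : t ∈ E n
        · simp [Set.indicator_of_mem ht, abs_of_nonneg (Real.rpow_nonneg (abs_nonneg _) p)]
        · simp [Set.indicator_of_notMem ht, Real.rpow_nonneg (abs_nonneg _) p]
      · refine Filter.Eventually.of_forall fun t => ?_
        by_cases ht : t ∈ ⋂ n, E n
        · have hmem : ∀ n, t ∈ E n := Set.mem_iInter.mp ht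
          simp only [Set.indicator_of_mem ht, Set.indicator_of_mem (hmem _)]
          exact tendsto_const_nhds
        · obtain ⟨n₀, hn₀⟩ : ∃ n₀, t ∉ E n₀ := by simpa [Set.mem_iInter] using ht
          rw [Set.indicator_of_notMem ht]
          apply tendsto_atTop_of_eventually_const (i₀ := n₀)
          intro n hn
          exact Set.indicator_of_notMem (fun h => hn₀ (hanti hn h)) _
    have hzero : (∫ t, (⋂ n, E n).indicator (fun t => |f t| ^ p) t ∂μ) = 0 := by
      rw [integral_indicator (MeasurableSet.iInter hE),
        Measure.restrict_eq_zero.mpr hcap, integral_zero_measure]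
    rw [hzero] at hlim
    refine hlim.congr fun n => ?_
    rw [integral_indicator (hE n), ← hIeq n p hp]
  -- pointwise convergence of F n p := lpNorm^Q to 0
  have htendF : ∀ p ∈ Set.Icc a b,
      Tendsto (fun n => (lpNorm μ p (g n)) ^ Q) atTop (nhds 0) := by
    intro p hp
    have hp0 := hppos p hp
    have h1 : Tendsto (fun n => lpNorm μ p (g n)) atTop (nhds 0) := by
      have := (htend0 p hp).rpow_const (p := 1 / p) (Or.inr (by positivity))
      rw [Real.zero_rpow (by positivity : (1:ℝ)/p ≠ 0)] at this
      exact this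
    have := h1.rpow_const (p := Q) (Or.inr hQ0.le)
    rwa [Real.zero_rpow hQ0.ne'] at this
  -- continuity in p of the integrals, for measurability
  have hcontI : ∀ n, ContinuousOn (fun p => ∫ t, |g n t| ^ p ∂μ) (Set.Icc a b) := by
    intro n p₀ hp₀
    have hp₀0 := hppos p₀ hp₀
    apply continuousWithinAt_of_dominated (bound := fun t => |f t| ^ a + |f t| ^ b)
    · filter_upwards [self_mem_nhdsWithin] with p hp
      have hmg : Measurable (g n) := hf.mul (measurable_const.indicator (hE n))
      exact ((Real.continuous_rpow_const (hppos p hp).le).measurable.comp hmg.abs).aestronglyMeasurable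
    · filter_upwards [self_mem_nhdsWithin] with p hp
      refine Filter.Eventually.of_forall fun t => ?_
      have hgle : |g n t| ≤ |f t| := by
        rw [hgdef]
        simp only [abs_mul]
        by_cases ht : t ∈ E n
        · simp [Set.indicator_of_mem ht]
        · simp [Set.indicator_of_notMem ht, abs_nonneg]
      have h1 : |g n t| ^ p ≤ |f t| ^ p :=
        Real.rpow_le_rpow (abs_nonneg _) hgle (hppos p hp).le
      have h2 : |f t| ^ p ≤ |f t| ^ a + |f t| ^ b := by
        rcases le_or_gt (|f t|) 1 with hc | hc
        · rcases eq_or_lt_of_le (abs_nonneg (f t)) with hc0 | hc0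
          · rw [← hc0]
            rw [Real.zero_rpow (hppos p hp).ne', Real.zero_rpow ha0.ne',
              Real.zero_rpow (lt_trans ha0 hab).ne']
            norm_num
          · calc |f t| ^ p ≤ |f t| ^ a :=
                  Real.rpow_le_rpow_of_exponent_ge hc0 hc hp.1
              _ ≤ |f t| ^ a + |f t| ^ b := le_add_of_nonneg_right (Real.rpow_nonneg (abs_nonneg _) _)
        · calc |f t| ^ p ≤ |f t| ^ b :=
                Real.rpow_le_rpow_of_exponent_le hc.le hp.2
            _ ≤ |f t| ^ a + |f t| ^ b := le_add_of_nonneg_left (Real.rpow_nonneg (abs_nonneg _) _)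
      rw [Real.norm_eq_abs, abs_of_nonneg (Real.rpow_nonneg (abs_nonneg _) p)]
      exact h1.trans h2
    · exact hIa.add hIb
    · refine Filter.Eventually.of_forall fun t => ?_
      exact (Real.continuousAt_const_rpow' hp₀0.ne').continuousWithinAt
  -- continuity of the full integrand in p
  have hcontF : ∀ n, ContinuousOn (fun p => (lpNorm μ p (g n)) ^ Q) (Set.Icc a b) := by
    intro n p₀ hp₀
    have hp₀0 := hppos p₀ hp₀
    have hinv : ContinuousWithinAt (fun p : ℝ => 1 / p) (Set.Icc a b) p₀ :=
      (ContinuousAt.div continuousAt_const continuousAt_id hp₀0.ne').continuousWithinAt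
    have h2 : ContinuousWithinAt (fun p => lpNorm μ p (g n)) (Set.Icc a b) p₀ := by
      have := (hcontI n p₀ hp₀).rpow hinv (Or.inr (by positivity))
      exact this
    exact h2.rpow_const (Or.inr hQ0.le)
  -- dominated convergence over ν
  have hboundν : ∀ n, ∀ᵐ p ∂(ν.restrict (Set.Icc a b)),
      ‖(lpNorm μ p (g n)) ^ Q‖ ≤ (lpNorm μ p f) ^ Q := by
    intro n
    refine ae_restrict_of_forall_mem measurableSet_Icc fun p hp => ?_
    have hp0 := hppos p hp
    have hIle : (∫ t, |g n t| ^ p ∂μ) ≤ ∫ t, |f t| ^ p ∂μ := by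
      refine integral_mono (hgint n p hp) (hfp p hp) fun t => ?_
      have hgle : |g n t| ≤ |f t| := by
        rw [hgdef]
        simp only [abs_mul]
        by_cases ht : t ∈ E n
        · simp [Set.indicator_of_mem ht]
        · simp [Set.indicator_of_notMem ht, abs_nonneg]
      exact Real.rpow_le_rpow (abs_nonneg _) hgle hp0.le
    have hI0 : (0:ℝ) ≤ ∫ t, |g n t| ^ p ∂μ :=
      integral_nonneg fun t => Real.rpow_nonneg (abs_nonneg _) _
    have hlple : lpNorm μ p (g n) ≤ lpNorm μ p f :=
      Real.rpow_le_rpow hI0 hIle (by positivity)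
    have hlp0 : (0:ℝ) ≤ lpNorm μ p (g n) := Real.rpow_nonneg hI0 _
    rw [Real.norm_eq_abs, abs_of_nonneg (Real.rpow_nonneg hlp0 _)]
    exact Real.rpow_le_rpow hlp0 hlple hQ0.le
  have hA : Tendsto (fun n => ∫ p in Set.Icc a b, (lpNorm μ p (g n)) ^ Q ∂ν)
      atTop (nhds 0) := by
    have := tendsto_integral_of_dominated_convergence
      (μ := ν.restrict (Set.Icc a b))
      (F := fun n p => (lpNorm μ p (g n)) ^ Q) (f := fun _ => (0:ℝ))
      (fun p => (lpNorm μ p f) ^ Q)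
      (fun n => (hcontF n).aestronglyMeasurable measurableSet_Icc)
      hint hboundν
      (ae_restrict_of_forall_mem measurableSet_Icc htendF)
    simpa using this
  have := hA.rpow_const (p := 1 / Q) (Or.inr (by positivity))
  rwa [Real.zero_rpow (by positivity : (1:ℝ)/Q ≠ 0)] at this
end

section
/- With notation as above (ν Lebesgue measure on [a,b], 1 ≤ a < b < ∞), the upper Boyd index of the IGLS space Y = G^{(Q)}_{μ,ν;a,b} equals 1/a; that is, lim_{s→∞} log||σ_s|| / log s = 1/a. -/
open MeasureTheory Real Set Filter

/-- The L^p norm over (0,∞) with Lebesgue measure. -/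
noncomputable def lpNormIoi (p : ℝ) (f : ℝ → ℝ) : ℝ :=
  (∫ t in Set.Ioi (0 : ℝ), |f t| ^ p) ^ (1 / p)

/-- The IGLS norm ||f||_Y = (∫_a^b |f|_p^Q dp)^{1/Q}, with ν = Lebesgue measure on [a,b]. -/
noncomputable def iglsNorm (a b Q : ℝ) (f : ℝ → ℝ) : ℝ :=
  (∫ p in Set.Icc a b, (lpNormIoi p f) ^ Q) ^ (1 / Q)

/-- The dilation operator σ_s[f](t) = f(t/s). -/
noncomputable def dilation (s : ℝ) (f : ℝ → ℝ) : ℝ → ℝ := fun t => f (t / s)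

/-- The operator norm of the dilation σ_s on the IGLS space. -/
noncomputable def dilOpNorm (a b Q s : ℝ) : ℝ :=
  sSup {x : ℝ | ∃ f : ℝ → ℝ, Measurable f ∧ iglsNorm a b Q f ≤ 1 ∧
    x = iglsNorm a b Q (dilation s f)}

lemma stmt5_lp_nonneg (p : ℝ) (f : ℝ → ℝ) : 0 ≤ lpNormIoi p f :=
  Real.rpow_nonneg (integral_nonneg fun t => Real.rpow_nonneg (abs_nonneg _) _) _

lemma stmt5_lp_dil (f : ℝ → ℝ) {s : ℝ} (hs : 0 < s) (p : ℝ) :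
    lpNormIoi p (dilation s f) = s ^ (1/p) * lpNormIoi p f := by
  unfold lpNormIoi dilation
  have h := integral_comp_mul_left_Ioi (fun t => |f t| ^ p) 0 (inv_pos.mpr hs)
  simp only [mul_zero, smul_eq_mul, inv_inv] at h
  have h2 : ∫ t in Ioi (0:ℝ), |f (t / s)| ^ p = s * ∫ t in Ioi (0:ℝ), |f t| ^ p := by
    simpa [div_eq_inv_mul] using h
  rw [h2, Real.mul_rpow hs.le (integral_nonneg fun t => Real.rpow_nonneg (abs_nonneg _) _)]

lemma stmt5_meas (f : ℝ → ℝ) (hf : Measurable f) :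
    Measurable fun p : ℝ => lpNormIoi p f := by
  have h : StronglyMeasurable (fun q : ℝ × ℝ => |f q.2| ^ q.1) :=
    (((hf.comp measurable_snd).abs).pow measurable_fst).stronglyMeasurable
  have h2 : Measurable fun p : ℝ => ∫ t in Ioi (0:ℝ), |f t| ^ p :=
    (h.integral_prod_right').measurable
  exact h2.pow (measurable_const.div measurable_id)

lemma stmt5_pow_dil {a b Q : ℝ} (ha : 1 ≤ a) (hQ : 1 ≤ Q) (f : ℝ → ℝ) {s : ℝ} (hs : 0 < s)
    {p : ℝ} (hp : p ∈ Set.Icc a b) :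
    (lpNormIoi p (dilation s f)) ^ Q = s ^ (Q / p) * (lpNormIoi p f) ^ Q := by
  have hp0 : 0 < p := lt_of_lt_of_le one_pos (le_trans ha hp.1)
  rw [stmt5_lp_dil f hs p, Real.mul_rpow (Real.rpow_nonneg hs.le _) (stmt5_lp_nonneg p f),
    ← Real.rpow_mul hs.le, div_mul_eq_mul_div, one_mul]

lemma stmt5_upper {a b Q : ℝ} (ha : 1 ≤ a) (hab : a < b) (hQ : 1 ≤ Q) {s : ℝ} (hs : 1 ≤ s)
    {f : ℝ → ℝ} (hf : Measurable f) (h1 : iglsNorm a b Q f ≤ 1) :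
    iglsNorm a b Q (dilation s f) ≤ s ^ (1/a) := by
  have hs0 : (0:ℝ) < s := lt_of_lt_of_le one_pos hs
  have ha0 : (0:ℝ) < a := lt_of_lt_of_le one_pos ha
  have hQ0 : (0:ℝ) < Q := lt_of_lt_of_le one_pos hQ
  set NN : ℝ → ℝ := fun p => (lpNormIoi p f) ^ Q with hNN
  have hNmeas : Measurable NN := (stmt5_meas f hf).pow measurable_const
  have hNnn : ∀ p, 0 ≤ NN p := fun p => Real.rpow_nonneg (stmt5_lp_nonneg p f) _
  have hcongr : ∫ p in Icc a b, (lpNormIoi p (dilation s f)) ^ Q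
      = ∫ p in Icc a b, s ^ (Q / p) * NN p :=
    setIntegral_congr_fun measurableSet_Icc (fun p hp => stmt5_pow_dil ha hQ f hs0 hp)
  have hGmeas : Measurable fun p => s ^ (Q / p) * NN p :=
    (measurable_const.pow (measurable_const.div measurable_id)).mul hNmeas
  have hGnn : ∀ p, 0 ≤ s ^ (Q / p) * NN p :=
    fun p => mul_nonneg (Real.rpow_nonneg hs0.le _) (hNnn p)
  have hle : ∀ p ∈ Icc a b, s ^ (Q / p) * NN p ≤ s ^ (Q / a) * NN p := by
    intro p hp
    refine mul_le_mul_of_nonneg_right ?_ (hNnn p)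
    exact Real.rpow_le_rpow_of_exponent_le hs
      (div_le_div_of_nonneg_left hQ0.le ha0 hp.1)
  have hge : ∀ p ∈ Icc a b, NN p ≤ s ^ (Q / p) * NN p := by
    intro p hp
    have hp0 : 0 < p := lt_of_lt_of_le one_pos (le_trans ha hp.1)
    nth_rewrite 1 [← one_mul (NN p)]
    refine mul_le_mul_of_nonneg_right ?_ (hNnn p)
    exact Real.one_le_rpow hs (div_nonneg hQ0.le hp0.le)
  have hInonneg : (0:ℝ) ≤ ∫ p in Icc a b, (lpNormIoi p (dilation s f)) ^ Q := by
    rw [hcongr]; exact integral_nonneg hGnn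
  rw [iglsNorm, hcongr]
  by_cases hInt : IntegrableOn NN (Icc a b) volume
  · -- integral of NN ≤ 1
    have hN1 : ∫ p in Icc a b, NN p ≤ 1 := by
      have h0 : (0:ℝ) ≤ ∫ p in Icc a b, NN p := integral_nonneg hNnn
      by_contra hc
      push_neg at hc
      have : (1:ℝ) < (∫ p in Icc a b, NN p) ^ (1/Q) :=
        Real.one_lt_rpow_iff_of_pos (lt_trans one_pos hc) |>.mpr <|
          Or.inl ⟨hc, by positivity⟩
      exact absurd (lt_of_lt_of_le this h1) (lt_irrefl _)
    have hGint : IntegrableOn (fun p => s ^ (Q / p) * NN p) (Icc a b) volume := by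
      refine Integrable.mono' ((hInt.const_mul (s ^ (Q / a)))) hGmeas.aestronglyMeasurable ?_
      refine (ae_restrict_iff' measurableSet_Icc).2 (ae_of_all _ fun p hp => ?_)
      rw [Real.norm_eq_abs, abs_of_nonneg (hGnn p)]
      exact hle p hp
    have h2 : ∫ p in Icc a b, s ^ (Q / p) * NN p ≤ ∫ p in Icc a b, s ^ (Q / a) * NN p :=
      setIntegral_mono_on hGint (hInt.const_mul _) measurableSet_Icc hle
    have h3 : ∫ p in Icc a b, s ^ (Q / a) * NN p = s ^ (Q / a) * ∫ p in Icc a b, NN p :=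
      integral_const_mul _ _
    have h4 : ∫ p in Icc a b, s ^ (Q / p) * NN p ≤ s ^ (Q / a) := by
      refine le_trans h2 ?_
      rw [h3]
      nth_rewrite 2 [← mul_one (s ^ (Q / a))]
      exact mul_le_mul_of_nonneg_left hN1 (Real.rpow_nonneg hs0.le _)
    calc (∫ p in Icc a b, s ^ (Q / p) * NN p) ^ (1/Q)
        ≤ (s ^ (Q / a)) ^ (1/Q) := by
          refine Real.rpow_le_rpow ?_ h4 (by positivity)
          exact integral_nonneg hGnn
      _ = s ^ (1/a) := by
          rw [← Real.rpow_mul hs0.le]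
          congr 1
          field_simp
  · -- non-integrable: integral is 0
    have hGnint : ¬ IntegrableOn (fun p => s ^ (Q / p) * NN p) (Icc a b) volume := by
      intro hGint
      refine hInt ?_
      refine Integrable.mono' hGint hNmeas.aestronglyMeasurable ?_
      refine (ae_restrict_iff' measurableSet_Icc).2 (ae_of_all _ fun p hp => ?_)
      rw [Real.norm_eq_abs, abs_of_nonneg (hNnn p)]
      exact hge p hp
    rw [integral_undef hGnint, Real.zero_rpow (by positivity)]
    exact Real.rpow_nonneg hs0.le _

lemma stmt5_lp_ind {c : ℝ} (hc : 0 ≤ c) {p : ℝ} (hp : 0 < p) :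
    lpNormIoi p (Set.indicator (Ioc (0:ℝ) 1) fun _ => c) = c := by
  unfold lpNormIoi
  have h1 : ∀ t : ℝ, |Set.indicator (Ioc (0:ℝ) 1) (fun _ => c) t| ^ p
      = Set.indicator (Ioc (0:ℝ) 1) (fun _ => c ^ p) t := by
    intro t
    by_cases ht : t ∈ Ioc (0:ℝ) 1 <;>
      simp [Set.indicator_of_mem, Set.indicator_of_notMem, ht, abs_of_nonneg hc,
        Real.zero_rpow hp.ne']
  simp_rw [h1]
  rw [integral_indicator measurableSet_Ioc, Measure.restrict_restrict measurableSet_Ioc,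
    Set.inter_eq_left.mpr Ioc_subset_Ioi_self, setIntegral_const]
  simp only [Real.volume_real_Ioc_of_le zero_le_one, sub_zero, ENNReal.ofReal_one, ENNReal.toReal_one, one_smul]
  rw [← Real.rpow_mul hc, mul_one_div_cancel hp.ne', Real.rpow_one]

lemma stmt5_lower {a b Q : ℝ} (ha : 1 ≤ a) (hab : a < b) (hQ : 1 ≤ Q) {s δ : ℝ}
    (hs : 1 ≤ s) (hδ0 : 0 < δ) (hδ : δ ≤ b - a) :
    ∃ f : ℝ → ℝ, Measurable f ∧ iglsNorm a b Q f ≤ 1 ∧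
      ((b-a)⁻¹ * (δ * s ^ (Q/(a+δ)))) ^ (1/Q) ≤ iglsNorm a b Q (dilation s f) := by
  have hs0 : (0:ℝ) < s := lt_of_lt_of_le one_pos hs
  have ha0 : (0:ℝ) < a := lt_of_lt_of_le one_pos ha
  have hQ0 : (0:ℝ) < Q := lt_of_lt_of_le one_pos hQ
  have hba : (0:ℝ) < b - a := by linarith
  set c : ℝ := ((b-a)⁻¹) ^ (1/Q) with hc
  have hc0 : 0 < c := Real.rpow_pos_of_pos (inv_pos.mpr hba) _
  have hcQ : c ^ Q = (b-a)⁻¹ := by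
    rw [hc, ← Real.rpow_mul (inv_pos.mpr hba).le, one_div_mul_cancel hQ0.ne', Real.rpow_one]
  set f₀ : ℝ → ℝ := Set.indicator (Ioc (0:ℝ) 1) (fun _ => c) with hf₀
  refine ⟨f₀, measurable_const.indicator measurableSet_Ioc, ?_, ?_⟩
  · -- norm of f₀ is 1
    have hcongr : ∫ p in Icc a b, (lpNormIoi p f₀) ^ Q = ∫ p in Icc a b, c ^ Q := by
      refine setIntegral_congr_fun measurableSet_Icc fun p hp => ?_
      rw [stmt5_lp_ind hc0.le (lt_of_lt_of_le one_pos (le_trans ha hp.1))]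
    rw [iglsNorm, hcongr, setIntegral_const]
    simp only [Real.volume_Icc, smul_eq_mul]
    rw [Real.volume_real_Icc_of_le hab.le, hcQ, mul_inv_cancel₀ hba.ne', Real.one_rpow]
  · -- lower bound for norm of dilation
    have hab' : a + δ ≤ b := by linarith
    have hcongr : ∫ p in Icc a b, (lpNormIoi p (dilation s f₀)) ^ Q
        = ∫ p in Icc a b, s ^ (Q / p) * c ^ Q := by
      refine setIntegral_congr_fun measurableSet_Icc fun p hp => ?_
      rw [stmt5_pow_dil ha hQ f₀ hs0 hp,
        stmt5_lp_ind hc0.le (lt_of_lt_of_le one_pos (le_trans ha hp.1))]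
    have hGnn : ∀ p : ℝ, 0 ≤ s ^ (Q / p) * c ^ Q :=
      fun p => mul_nonneg (Real.rpow_nonneg hs0.le _) (Real.rpow_nonneg hc0.le _)
    have hGint : IntegrableOn (fun p => s ^ (Q / p) * c ^ Q) (Icc a b) volume := by
      refine Integrable.mono' (g := fun _ => s ^ (Q/a) * c ^ Q)
        (integrableOn_const measure_Icc_lt_top.ne)
        (((measurable_const.pow (measurable_const.div measurable_id)).mul
          measurable_const).aestronglyMeasurable) ?_
      refine (ae_restrict_iff' measurableSet_Icc).2 (ae_of_all _ fun p hp => ?_)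
      rw [Real.norm_eq_abs, abs_of_nonneg (hGnn p)]
      refine mul_le_mul_of_nonneg_right ?_ (Real.rpow_nonneg hc0.le _)
      exact Real.rpow_le_rpow_of_exponent_le hs (div_le_div_of_nonneg_left hQ0.le ha0 hp.1)
    have h5 : ∫ p in Icc a (a+δ), s ^ (Q / p) * c ^ Q
        ≤ ∫ p in Icc a b, s ^ (Q / p) * c ^ Q := by
      refine setIntegral_mono_set hGint (ae_of_all _ hGnn) ?_
      exact HasSubset.Subset.eventuallyLE (Icc_subset_Icc_right hab')
    have h6 : ∫ p in Icc a (a+δ), (s ^ (Q / (a+δ)) * c ^ Q)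
        ≤ ∫ p in Icc a (a+δ), s ^ (Q / p) * c ^ Q := by
      refine setIntegral_mono_on (integrableOn_const measure_Icc_lt_top.ne)
        (hGint.mono_set (Icc_subset_Icc_right hab')) measurableSet_Icc fun p hp => ?_
      refine mul_le_mul_of_nonneg_right ?_ (Real.rpow_nonneg hc0.le _)
      refine Real.rpow_le_rpow_of_exponent_le hs ?_
      have hp0 : 0 < p := lt_of_lt_of_le one_pos (le_trans ha hp.1)
      exact div_le_div_of_nonneg_left hQ0.le hp0 hp.2
    have h7 : ∫ p in Icc a (a+δ), (s ^ (Q / (a+δ)) * c ^ Q) = δ * (s ^ (Q / (a+δ)) * c ^ Q) := by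
      rw [setIntegral_const]
      simp only [Real.volume_Icc, smul_eq_mul, add_sub_cancel_left]
      rw [Real.volume_real_Icc_of_le (by linarith), add_sub_cancel_left]
    rw [iglsNorm, hcongr]
    have hfinal : (b-a)⁻¹ * (δ * s ^ (Q/(a+δ))) ≤ ∫ p in Icc a b, s ^ (Q / p) * c ^ Q := by
      calc (b-a)⁻¹ * (δ * s ^ (Q/(a+δ))) = δ * (s ^ (Q / (a+δ)) * c ^ Q) := by rw [hcQ]; ring
        _ ≤ _ := le_trans (le_of_eq h7.symm) (le_trans h6 h5)
    refine Real.rpow_le_rpow ?_ hfinal (by positivity)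
    positivity

lemma stmt5_alg {L Q aδ : ℝ} (A B : ℝ) (hL : L ≠ 0) (hQ : Q ≠ 0) (haδ : aδ ≠ 0) :
    (A + B) / (Q * L) + 1 / aδ = (1/Q) * (A + (B + (Q/aδ) * L)) / L := by
  field_simp
  ring

/-- the upper Boyd index of the IGLS space equals 1/a:
lim_{s→∞} log ||σ_s|| / log s = 1/a. -/
theorem stmt5 (a b Q : ℝ) (ha : 1 ≤ a) (hab : a < b) (hQ : 1 ≤ Q) :
    Tendsto (fun s => Real.log (dilOpNorm a b Q s) / Real.log s) atTop
      (nhds (1 / a)) := by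
  have ha0 : (0:ℝ) < a := lt_of_lt_of_le one_pos ha
  have hQ0 : (0:ℝ) < Q := lt_of_lt_of_le one_pos hQ
  have hba : (0:ℝ) < b - a := by linarith
  set LB : ℝ → ℝ := fun s =>
    (Real.log ((b-a)⁻¹) + Real.log ((Real.log s)⁻¹)) / (Q * Real.log s)
      + 1/(a + (Real.log s)⁻¹) with hLBdef
  -- limit of LB is 1/a
  have hT1 : Tendsto (fun s : ℝ =>
      (Real.log ((b-a)⁻¹) + Real.log ((Real.log s)⁻¹)) / (Q * Real.log s)) atTop (nhds 0) := by
    have hy : Tendsto (fun y : ℝ =>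
        (Real.log ((b-a)⁻¹) + Real.log y⁻¹) / (Q * y)) atTop (nhds 0) := by
      have e1 : Tendsto (fun y : ℝ => Real.log ((b-a)⁻¹) / (Q * y)) atTop (nhds 0) := by
        have h := (Tendsto.const_mul_atTop hQ0 (tendsto_id (α := ℝ))).inv_tendsto_atTop
        have h2 := h.const_mul (Real.log ((b-a)⁻¹))
        simpa [div_eq_mul_inv, mul_comm] using h2
      have e2 : Tendsto (fun y : ℝ => Real.log y⁻¹ / (Q * y)) atTop (nhds 0) := by
        have h := (Real.isLittleO_log_id_atTop.tendsto_div_nhds_zero).const_mul (-(Q⁻¹))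
        have heq : (fun y : ℝ => -(Q⁻¹) * (Real.log y / y))
            = fun y : ℝ => Real.log y⁻¹ / (Q * y) := by
          funext y
          simp only [Real.log_inv, div_eq_mul_inv, mul_inv]
          ring
        simp only [id] at h
        rw [heq] at h
        simpa using h
      have h3 := e1.add e2
      simp only [add_zero] at h3
      convert h3 using 2 with y
      rw [add_div]
    exact hy.comp Real.tendsto_log_atTop
  have hT2 : Tendsto (fun s : ℝ => 1/(a + (Real.log s)⁻¹)) atTop (nhds (1/a)) := by
    have h : Tendsto (fun s : ℝ => a + (Real.log s)⁻¹) atTop (nhds a) := by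
      have := Real.tendsto_log_atTop.inv_tendsto_atTop
      simpa using tendsto_const_nhds.add this
    have h2 := h.inv₀ ha0.ne'
    simpa [one_div] using h2
  have hLBlim : Tendsto LB atTop (nhds (1/a)) := by
    rw [hLBdef]
    simpa using hT1.add hT2
  -- eventual bounds
  have hev : ∀ᶠ s : ℝ in atTop, (1:ℝ) ≤ s ∧ 1 ≤ Real.log s ∧ (Real.log s)⁻¹ ≤ b - a := by
    filter_upwards [eventually_ge_atTop (1:ℝ),
      Real.tendsto_log_atTop.eventually_ge_atTop (1:ℝ),
      Real.tendsto_log_atTop.eventually_ge_atTop ((b-a)⁻¹)] with s hs1 hs2 hs3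
    refine ⟨hs1, hs2, ?_⟩
    rw [← inv_inv (b - a)]
    exact inv_anti₀ (inv_pos.mpr hba) hs3
  refine tendsto_of_tendsto_of_tendsto_of_le_of_le' hLBlim tendsto_const_nhds ?_ ?_
  · -- LB ≤ log D / log s
    filter_upwards [hev] with s hs
    obtain ⟨hs1, hs2, hs3⟩ := hs
    have hs0 : (0:ℝ) < s := lt_of_lt_of_le one_pos hs1
    have hlog0 : (0:ℝ) < Real.log s := lt_of_lt_of_le one_pos hs2
    set δ : ℝ := (Real.log s)⁻¹ with hδdef
    have hδ0 : 0 < δ := inv_pos.mpr hlog0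
    set M : ℝ := ((b-a)⁻¹ * (δ * s ^ (Q/(a+δ)))) ^ (1/Q) with hMdef
    have hM0 : 0 < M := by
      refine Real.rpow_pos_of_pos ?_ _
      exact mul_pos (inv_pos.mpr hba) (mul_pos hδ0 (Real.rpow_pos_of_pos hs0 _))
    obtain ⟨f, hfm, hf1, hfge⟩ := stmt5_lower ha hab hQ hs1 hδ0 hs3
    have hbdd : BddAbove {x : ℝ | ∃ f : ℝ → ℝ, Measurable f ∧ iglsNorm a b Q f ≤ 1 ∧
        x = iglsNorm a b Q (dilation s f)} := by
      refine ⟨s ^ (1/a), ?_⟩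
      rintro x ⟨g, hgm, hg1, rfl⟩
      exact stmt5_upper ha hab hQ hs1 hgm hg1
    have hDge : M ≤ dilOpNorm a b Q s := by
      refine le_trans hfge ?_
      exact le_csSup hbdd ⟨f, hfm, hf1, rfl⟩
    have hD0 : 0 < dilOpNorm a b Q s := lt_of_lt_of_le hM0 hDge
    have hlogle : Real.log M ≤ Real.log (dilOpNorm a b Q s) := Real.log_le_log hM0 hDge
    have hLBeq : LB s = Real.log M / Real.log s := by
      have hlogM : Real.log M
          = (1/Q) * (Real.log ((b-a)⁻¹) + (Real.log δ + (Q/(a+δ)) * Real.log s)) := by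
        rw [hMdef, Real.log_rpow (mul_pos (inv_pos.mpr hba)
            (mul_pos hδ0 (Real.rpow_pos_of_pos hs0 _))),
          Real.log_mul (inv_pos.mpr hba).ne' (mul_pos hδ0 (Real.rpow_pos_of_pos hs0 _)).ne',
          Real.log_mul hδ0.ne' (Real.rpow_pos_of_pos hs0 _).ne', Real.log_rpow hs0]
      simp only [hLBdef]
      rw [hlogM]
      have haδ : a + δ ≠ 0 := by positivity
      exact stmt5_alg _ _ hlog0.ne' hQ0.ne' haδ
    calc LB s = Real.log M / Real.log s := hLBeq
      _ ≤ _ := by gcongr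
  · -- log D / log s ≤ 1/a
    filter_upwards [hev] with s hs
    obtain ⟨hs1, hs2, hs3⟩ := hs
    have hs0 : (0:ℝ) < s := lt_of_lt_of_le one_pos hs1
    have hlog0 : (0:ℝ) < Real.log s := lt_of_lt_of_le one_pos hs2
    have hδ0 : 0 < (Real.log s)⁻¹ := inv_pos.mpr hlog0
    obtain ⟨f, hfm, hf1, hfge⟩ := stmt5_lower ha hab hQ hs1 hδ0 hs3
    have hbdd : BddAbove {x : ℝ | ∃ f : ℝ → ℝ, Measurable f ∧ iglsNorm a b Q f ≤ 1 ∧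
        x = iglsNorm a b Q (dilation s f)} := by
      refine ⟨s ^ (1/a), ?_⟩
      rintro x ⟨g, hgm, hg1, rfl⟩
      exact stmt5_upper ha hab hQ hs1 hgm hg1
    have hM0 : (0:ℝ) < ((b-a)⁻¹ * ((Real.log s)⁻¹ * s ^ (Q/(a+(Real.log s)⁻¹)))) ^ (1/Q) := by
      refine Real.rpow_pos_of_pos ?_ _
      exact mul_pos (inv_pos.mpr hba) (mul_pos hδ0 (Real.rpow_pos_of_pos hs0 _))
    have hD0 : 0 < dilOpNorm a b Q s :=
      lt_of_lt_of_le hM0 (le_trans hfge (le_csSup hbdd ⟨f, hfm, hf1, rfl⟩))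
    have hDle : dilOpNorm a b Q s ≤ s ^ (1/a) := by
      refine Real.sSup_le ?_ (Real.rpow_nonneg hs0.le _)
      rintro x ⟨g, hgm, hg1, rfl⟩
      exact stmt5_upper ha hab hQ hs1 hgm hg1
    have hkey : Real.log (dilOpNorm a b Q s) ≤ (1/a) * Real.log s := by
      calc Real.log (dilOpNorm a b Q s) ≤ Real.log (s ^ (1/a)) := Real.log_le_log hD0 hDle
        _ = (1/a) * Real.log s := Real.log_rpow hs0 _
    calc Real.log (dilOpNorm a b Q s) / Real.log s
        ≤ ((1/a) * Real.log s) / Real.log s := by gcongr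
      _ = 1/a := by rw [mul_div_assoc, div_self hlog0.ne', mul_one]
end

section
/- Let ν have continuous density h on [a,b] with h(a) > 0, 1 ≤ a < b < ∞, Q ≥ 1. Then as δ → ∞, the fundamental function satisfies φ_Y(δ)^Q = ∫_a^b δ^{Q/p} h(p) dp ∼ (h(a) a² / (Q log δ)) · δ^{Q/a}, i.e., the ratio of the two sides tends to 1. -/
open MeasureTheory Real Set Filter

lemma int_exp_mul (k x y : ℝ) (hk : k ≠ 0) :
    ∫ p in x..y, Real.exp (k * p) = (Real.exp (k * y) - Real.exp (k * x)) / k := by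
  have hderiv : ∀ p ∈ Set.uIcc x y, HasDerivAt (fun q => Real.exp (k * q) / k) (Real.exp (k * p)) p := by
    intro p _
    have h1 : HasDerivAt (fun q : ℝ => k * q) k p := by
      simpa using (hasDerivAt_id p).const_mul k
    have h2 := (Real.hasDerivAt_exp (k * p)).comp p h1
    have h3 := h2.div_const k
    simpa [mul_div_cancel_right₀ _ hk] using h3
  rw [intervalIntegral.integral_eq_sub_of_hasDerivAt hderiv
    ((Real.continuous_exp.comp (continuous_const.mul continuous_id)).continuousOn.intervalIntegrable)]
  ring

lemma int_exp_shift (k x y c : ℝ) (hk : k ≠ 0) :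
    ∫ p in x..y, Real.exp (k * (p - c)) = (Real.exp (k * (y - c)) - Real.exp (k * (x - c))) / k := by
  rw [intervalIntegral.integral_comp_sub_right (fun p => Real.exp (k * p)) c]
  exact int_exp_mul k (x - c) (y - c) hk

lemma key_lower (a p : ℝ) (ha : 0 < a) (h1 : a ≤ p) :
    1 / a - (p - a) / a ^ 2 ≤ 1 / p := by
  have hp : 0 < p := lt_of_lt_of_le ha h1
  have h3 : 1 / a - (p - a) / a ^ 2 = (2 * a - p) / a ^ 2 := by field_simp; ring
  rw [h3, div_le_div_iff₀ (by positivity) hp]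
  nlinarith [sq_nonneg (a - p)]

lemma key_upper (a η p : ℝ) (ha : 0 < a) (hη : 0 < η) (h1 : a ≤ p) (h2 : p ≤ a + η) :
    1 / p ≤ 1 / a - (p - a) / (a * (a + η)) := by
  have hp : 0 < p := lt_of_lt_of_le ha h1
  have h3 : 1 / a - (p - a) / (a * (a + η)) = (2 * a + η - p) / (a * (a + η)) := by
    field_simp; ring
  rw [h3, div_le_div_iff₀ hp (by positivity)]
  nlinarith [mul_nonneg (sub_nonneg.2 h1) (sub_nonneg.2 h2)]

lemma tendsto_mul_exp_neg (k : ℝ) (hk : 0 < k) :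
    Tendsto (fun t : ℝ => t * Real.exp (-(k * t))) atTop (nhds 0) := by
  have h0 : Tendsto (fun x : ℝ => x * Real.exp (-x)) atTop (nhds 0) := by
    simpa using Real.tendsto_pow_mul_exp_neg_atTop_nhds_zero 1
  have hk' : Tendsto (fun t : ℝ => k * t) atTop atTop :=
    Tendsto.const_mul_atTop hk tendsto_id
  have h1 := h0.comp hk'
  have h2 := h1.const_mul (1 / k)
  simp only [mul_zero] at h2
  refine h2.congr (fun t => ?_)
  field_simp
  simp only [Function.comp_apply]

lemma aux (a b : ℝ) (ha : 1 ≤ a) (hab : a < b) (h : ℝ → ℝ)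
    (hcont : ContinuousOn h (Set.Icc a b))
    (hnonneg : ∀ p ∈ Set.Icc a b, 0 ≤ h p) (hpos : 0 < h a) :
    Tendsto (fun t => (∫ p in a..b, Real.exp (t / p) * h p) /
      (h a * a ^ 2 / t * Real.exp (t / a))) atTop (nhds 1) := by
  have ha0 : (0:ℝ) < a := by linarith
  have hcw : ContinuousWithinAt h (Set.Icc a b) a := hcont a ⟨le_refl a, hab.le⟩
  have hcont' : ∀ t : ℝ, ContinuousOn (fun p => Real.exp (t / p) * h p) (Set.Icc a b) := by
    intro t
    exact (ContinuousOn.rexp (ContinuousOn.div (f := fun _ : ℝ => t) (g := fun p : ℝ => p) continuousOn_const continuousOn_id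
      (fun p (hp : p ∈ Set.Icc a b) => ne_of_gt (lt_of_lt_of_le ha0 hp.1)))).mul hcont
  have hInt : ∀ t : ℝ, ∀ x y, x ∈ Set.Icc a b → y ∈ Set.Icc a b →
      IntervalIntegrable (fun p => Real.exp (t / p) * h p) volume x y := by
    intro t x y hx hy
    exact ((hcont' t).mono (Set.uIcc_subset_Icc hx hy)).intervalIntegrable
  rw [tendsto_order]
  constructor
  · -- lower bound
    intro c hc
    set ε : ℝ := min ((1 - c) / 2) (1 / 2) with hεdef
    have hε0 : 0 < ε := lt_min (by linarith) (by norm_num)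
    have hεhalf : ε ≤ 1 / 2 := min_le_right _ _
    have hεc : c < 1 - ε := by
      have h1 := min_le_left ((1 - c) / 2) (1 / 2 : ℝ)
      rw [← hεdef] at h1
      linarith
    obtain ⟨d, hd0, hdp⟩ := Metric.continuousWithinAt_iff.mp hcw (ε * h a) (by positivity)
    set η : ℝ := min (d / 2) (b - a) with hηdef
    have hη0 : 0 < η := lt_min (by linarith) (by linarith)
    have hηb : a + η ≤ b := by
      have := min_le_right (d / 2) (b - a)
      rw [← hηdef] at this; linarith
    have hmemη : a + η ∈ Set.Icc a b := ⟨by linarith, hηb⟩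
    have hmema : a ∈ Set.Icc a b := ⟨le_refl a, hab.le⟩
    have hmemb : b ∈ Set.Icc a b := ⟨hab.le, le_refl b⟩
    have hhp : ∀ p ∈ Set.Icc a (a + η), (1 - ε) * h a ≤ h p := by
      intro p hp
      have hpab : p ∈ Set.Icc a b := ⟨hp.1, le_trans hp.2 hηb⟩
      have hdist : dist p a < d := by
        rw [Real.dist_eq, abs_of_nonneg (by linarith [hp.1])]
        have h1 := min_le_left (d / 2) (b - a)
        rw [← hηdef] at h1
        linarith [hp.2]
      have h2 := hdp hpab hdist
      rw [Real.dist_eq] at h2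
      have h3 := (abs_lt.mp h2).1
      nlinarith
    have hmain : ∀ t : ℝ, 0 < t →
        (1 - ε) * (1 - Real.exp (-(t / a ^ 2) * η)) ≤
        (∫ p in a..b, Real.exp (t / p) * h p) / (h a * a ^ 2 / t * Real.exp (t / a)) := by
      intro t ht
      have hD : 0 < h a * a ^ 2 / t * Real.exp (t / a) := by positivity
      rw [le_div_iff₀ hD]
      have hk0 : (t / a ^ 2) ≠ 0 := ne_of_gt (by positivity)
      have hstep3 : ∫ p in a..(a + η),
            (Real.exp (t / a) * ((1 - ε) * h a)) * Real.exp (-(t / a ^ 2) * (p - a))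
          = (Real.exp (t / a) * ((1 - ε) * h a)) *
            ((1 - Real.exp (-(t / a ^ 2) * η)) / (t / a ^ 2)) := by
        rw [intervalIntegral.integral_const_mul,
          int_exp_shift (-(t / a ^ 2)) a (a + η) a (neg_ne_zero.2 hk0)]
        congr 1
        rw [show a + η - a = η by ring, sub_self, mul_zero, Real.exp_zero]
        rw [div_neg, ← neg_div, neg_sub]
      have hmono : ∫ p in a..(a + η),
            (Real.exp (t / a) * ((1 - ε) * h a)) * Real.exp (-(t / a ^ 2) * (p - a))
          ≤ ∫ p in a..(a + η), Real.exp (t / p) * h p := by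
        apply intervalIntegral.integral_mono_on (by linarith)
        · exact (Continuous.intervalIntegrable (by fun_prop) _ _)
        · exact hInt t a (a + η) hmema hmemη
        · intro p hp
          have hpa : a ≤ p := hp.1
          have hp0 : 0 < p := lt_of_lt_of_le ha0 hpa
          have he : Real.exp (t / a) * Real.exp (-(t / a ^ 2) * (p - a)) ≤ Real.exp (t / p) := by
            rw [← Real.exp_add, Real.exp_le_exp]
            have h1 := key_lower a p ha0 hpa
            have h2 : t / a + -(t / a ^ 2) * (p - a) = t * (1 / a - (p - a) / a ^ 2) := by
              ring
            have h3 : t / p = t * (1 / p) := by ring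
            rw [h2, h3]
            exact mul_le_mul_of_nonneg_left h1 ht.le
          calc (Real.exp (t / a) * ((1 - ε) * h a)) * Real.exp (-(t / a ^ 2) * (p - a))
              = (Real.exp (t / a) * Real.exp (-(t / a ^ 2) * (p - a))) * ((1 - ε) * h a) := by
                ring
            _ ≤ Real.exp (t / p) * h p :=
                mul_le_mul he (hhp p hp) (by nlinarith) (Real.exp_nonneg _)
      have hsplit : ∫ p in a..(a + η), Real.exp (t / p) * h p
          ≤ ∫ p in a..b, Real.exp (t / p) * h p := by
        have hadd := intervalIntegral.integral_add_adjacent_intervals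
          (hInt t a (a + η) hmema hmemη) (hInt t (a + η) b hmemη hmemb)
        have hnn : 0 ≤ ∫ p in (a + η)..b, Real.exp (t / p) * h p :=
          intervalIntegral.integral_nonneg hηb
            (fun p hp => mul_nonneg (Real.exp_nonneg _)
              (hnonneg p ⟨le_trans (by linarith) hp.1, hp.2⟩))
        linarith
      have heq : (1 - ε) * (1 - Real.exp (-(t / a ^ 2) * η)) *
            (h a * a ^ 2 / t * Real.exp (t / a))
          = (Real.exp (t / a) * ((1 - ε) * h a)) *
            ((1 - Real.exp (-(t / a ^ 2) * η)) / (t / a ^ 2)) := by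
        field_simp
      rw [heq, ← hstep3]
      exact le_trans hmono hsplit
    have hbot : Tendsto (fun t : ℝ => -(t / a ^ 2) * η) atTop atBot := by
      have h1 : Tendsto (fun t : ℝ => (η / a ^ 2) * t) atTop atTop :=
        Tendsto.const_mul_atTop (by positivity) tendsto_id
      have h2 := tendsto_neg_atTop_atBot.comp h1
      refine h2.congr (fun t => ?_)
      simp only [Function.comp_apply]
      ring
    have hg : Tendsto (fun t : ℝ => (1 - ε) * (1 - Real.exp (-(t / a ^ 2) * η))) atTop
        (nhds ((1 - ε) * (1 - 0))) :=
      (tendsto_const_nhds.sub (Real.tendsto_exp_atBot.comp hbot)).const_mul _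
    have hgc : ∀ᶠ t in atTop, c < (1 - ε) * (1 - Real.exp (-(t / a ^ 2) * η)) :=
      hg.eventually (eventually_gt_nhds (by simpa using hεc))
    filter_upwards [hgc, eventually_gt_atTop 0] with t h1 h2
    exact lt_of_lt_of_le h1 (hmain t h2)
  · -- upper bound
    intro c hc
    set ε : ℝ := min ((c - 1) / 4) 1 with hεdef
    have hε0 : 0 < ε := lt_min (by linarith) (by norm_num)
    have hε1 : ε ≤ 1 := min_le_right _ _
    have hεc : ε ≤ (c - 1) / 4 := min_le_left _ _
    obtain ⟨d, hd0, hdp⟩ := Metric.continuousWithinAt_iff.mp hcw (ε * h a) (by positivity)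
    set η : ℝ := min (d / 2) (min (b - a) (ε * a)) with hηdef
    have hη0 : 0 < η := lt_min (by linarith) (lt_min (by linarith) (by positivity))
    have hηb : a + η ≤ b := by
      have := le_trans (min_le_right (d / 2) _) (min_le_left (b - a) (ε * a))
      rw [← hηdef] at this; linarith
    have hηε : η ≤ ε * a := by
      have := le_trans (min_le_right (d / 2) _) (min_le_right (b - a) (ε * a))
      rw [← hηdef] at this; linarith
    have hmemη : a + η ∈ Set.Icc a b := ⟨by linarith, hηb⟩
    have hmema : a ∈ Set.Icc a b := ⟨le_refl a, hab.le⟩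
    have hmemb : b ∈ Set.Icc a b := ⟨hab.le, le_refl b⟩
    have hhp : ∀ p ∈ Set.Icc a (a + η), h p ≤ (1 + ε) * h a := by
      intro p hp
      have hpab : p ∈ Set.Icc a b := ⟨hp.1, le_trans hp.2 hηb⟩
      have hdist : dist p a < d := by
        rw [Real.dist_eq, abs_of_nonneg (by linarith [hp.1])]
        have h1 := min_le_left (d / 2) (min (b - a) (ε * a))
        rw [← hηdef] at h1
        linarith [hp.2]
      have h2 := hdp hpab hdist
      rw [Real.dist_eq] at h2
      have h3 := (abs_lt.mp h2).2
      nlinarith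
    obtain ⟨x, hx, hmax⟩ := isCompact_Icc.exists_isMaxOn
      (Set.nonempty_Icc.mpr hab.le) hcont
    set M : ℝ := h x with hMdef
    have hM : ∀ p ∈ Set.Icc a b, h p ≤ M := fun p hp => hmax hp
    have hM0 : 0 < M := lt_of_lt_of_le hpos (hM a hmema)
    set k : ℝ := 1 / a - 1 / (a + η) with hkdef
    have hk0 : 0 < k := by
      rw [hkdef]
      have : 1 / (a + η) < 1 / a := by
        apply one_div_lt_one_div_of_lt ha0; linarith
      linarith
    set c₀ : ℝ := 1 / (a * (a + η)) with hc₀def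
    have hc₀0 : 0 < c₀ := by rw [hc₀def]; positivity
    have hmain : ∀ t : ℝ, 0 < t →
        (∫ p in a..b, Real.exp (t / p) * h p) / (h a * a ^ 2 / t * Real.exp (t / a))
        ≤ (1 + ε) * (a + η) / a +
          M * (b - (a + η)) / (h a * a ^ 2) * (t * Real.exp (-(k * t))) := by
      intro t ht
      have hD : 0 < h a * a ^ 2 / t * Real.exp (t / a) := by positivity
      rw [div_le_iff₀ hD]
      have hct0 : (0:ℝ) < c₀ * t := by positivity
      -- bound I₁
      have hI1 : ∫ p in a..(a + η), Real.exp (t / p) * h p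
          ≤ (Real.exp (t / a) * ((1 + ε) * h a)) * (a * (a + η) / t) := by
        have hmono : ∫ p in a..(a + η), Real.exp (t / p) * h p
            ≤ ∫ p in a..(a + η),
              (Real.exp (t / a) * ((1 + ε) * h a)) * Real.exp (-(c₀ * t) * (p - a)) := by
          apply intervalIntegral.integral_mono_on (by linarith)
          · exact hInt t a (a + η) hmema hmemη
          · exact (Continuous.intervalIntegrable (by fun_prop) _ _)
          · intro p hp
            have hpa : a ≤ p := hp.1
            have hp0 : 0 < p := lt_of_lt_of_le ha0 hpa
            have he : Real.exp (t / p) ≤ Real.exp (t / a) * Real.exp (-(c₀ * t) * (p - a)) := by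
              rw [← Real.exp_add, Real.exp_le_exp]
              have h1 := key_upper a η p ha0 hη0 hpa hp.2
              have h2 : t / a + -(c₀ * t) * (p - a)
                  = t * (1 / a - (p - a) / (a * (a + η))) := by
                rw [hc₀def]; ring
              have h3 : t / p = t * (1 / p) := by ring
              rw [h2, h3]
              exact mul_le_mul_of_nonneg_left h1 ht.le
            calc Real.exp (t / p) * h p
                ≤ (Real.exp (t / a) * Real.exp (-(c₀ * t) * (p - a))) * ((1 + ε) * h a) :=
                  mul_le_mul he (hhp p hp) (hnonneg p ⟨hp.1, le_trans hp.2 hηb⟩)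
                    (by positivity)
              _ = (Real.exp (t / a) * ((1 + ε) * h a)) * Real.exp (-(c₀ * t) * (p - a)) := by
                  ring
        have hcomp : ∫ p in a..(a + η),
              (Real.exp (t / a) * ((1 + ε) * h a)) * Real.exp (-(c₀ * t) * (p - a))
            = (Real.exp (t / a) * ((1 + ε) * h a)) *
              ((1 - Real.exp (-(c₀ * t) * η)) / (c₀ * t)) := by
          rw [intervalIntegral.integral_const_mul,
            int_exp_shift (-(c₀ * t)) a (a + η) a (neg_ne_zero.2 (ne_of_gt hct0))]
          congr 1
          rw [show a + η - a = η by ring, sub_self, mul_zero, Real.exp_zero]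
          rw [div_neg, ← neg_div, neg_sub]
        have hle2 : (Real.exp (t / a) * ((1 + ε) * h a)) *
              ((1 - Real.exp (-(c₀ * t) * η)) / (c₀ * t))
            ≤ (Real.exp (t / a) * ((1 + ε) * h a)) * (a * (a + η) / t) := by
          apply mul_le_mul_of_nonneg_left _ (by positivity)
          have h1 : (1 - Real.exp (-(c₀ * t) * η)) / (c₀ * t) ≤ 1 / (c₀ * t) := by
            gcongr
            · linarith [Real.exp_nonneg (-(c₀ * t) * η)]
          have h2 : 1 / (c₀ * t) = a * (a + η) / t := by
            rw [hc₀def]; field_simp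
          linarith [h2 ▸ h1]
        calc ∫ p in a..(a + η), Real.exp (t / p) * h p
            ≤ _ := hmono
          _ = _ := hcomp
          _ ≤ _ := hle2
      have hI2 : ∫ p in (a + η)..b, Real.exp (t / p) * h p
          ≤ (b - (a + η)) * (Real.exp (t / (a + η)) * M) := by
        have hp0 : (0:ℝ) < a + η := by linarith
        have hmono : ∫ p in (a + η)..b, Real.exp (t / p) * h p
            ≤ ∫ _ in (a + η)..b, Real.exp (t / (a + η)) * M := by
          apply intervalIntegral.integral_mono_on hηb
          · exact hInt t (a + η) b hmemη hmemb
          · exact intervalIntegrable_const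
          · intro p hp
            have hp1 : a + η ≤ p := hp.1
            have he : Real.exp (t / p) ≤ Real.exp (t / (a + η)) := by
              rw [Real.exp_le_exp]
              gcongr
            exact mul_le_mul he (hM p ⟨by linarith, hp.2⟩)
              (hnonneg p ⟨by linarith, hp.2⟩) (Real.exp_nonneg _)
        have hconst : (∫ _ in (a + η)..b, Real.exp (t / (a + η)) * M)
            = (b - (a + η)) * (Real.exp (t / (a + η)) * M) := by
          rw [intervalIntegral.integral_const, smul_eq_mul]
        linarith [hconst ▸ hmono]
      have hadd := intervalIntegral.integral_add_adjacent_intervals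
        (hInt t a (a + η) hmema hmemη) (hInt t (a + η) b hmemη hmemb)
      have hane : a ≠ 0 := ha0.ne'
      have htne : t ≠ 0 := ht.ne'
      have hhane : h a ≠ 0 := hpos.ne'
      have he3 : Real.exp (-(k * t)) * Real.exp (t / a) = Real.exp (t / (a + η)) := by
        rw [← Real.exp_add]
        congr 1
        rw [hkdef]
        field_simp
        ring
      have heq : ((1 + ε) * (a + η) / a +
            M * (b - (a + η)) / (h a * a ^ 2) * (t * Real.exp (-(k * t)))) *
            (h a * a ^ 2 / t * Real.exp (t / a))
          = (Real.exp (t / a) * ((1 + ε) * h a)) * (a * (a + η) / t)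
            + (b - (a + η)) * (Real.exp (t / (a + η)) * M) := by
        rw [← he3]
        field_simp
      rw [heq, ← hadd]
      exact add_le_add hI1 hI2
    have hg : Tendsto (fun t : ℝ => (1 + ε) * (a + η) / a +
        M * (b - (a + η)) / (h a * a ^ 2) * (t * Real.exp (-(k * t)))) atTop
        (nhds ((1 + ε) * (a + η) / a + M * (b - (a + η)) / (h a * a ^ 2) * 0)) :=
      tendsto_const_nhds.add ((tendsto_mul_exp_neg k hk0).const_mul _)
    have hlt : (1 + ε) * (a + η) / a + M * (b - (a + η)) / (h a * a ^ 2) * 0 < c := by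
      rw [mul_zero, add_zero]
      have h1 : (a + η) / a ≤ 1 + ε := by
        rw [div_le_iff₀ ha0]; nlinarith
      rw [mul_div_assoc]
      nlinarith
    have hgc := hg.eventually (eventually_lt_nhds hlt)
    filter_upwards [hgc, eventually_gt_atTop 0] with t h1 h2
    exact lt_of_le_of_lt (hmain t h2) h1


/-- if ν has continuous density h on [a,b] with h(a) > 0, then as δ → ∞,
∫_a^b δ^{Q/p} h(p) dp ∼ (h(a)·a²/(Q log δ))·δ^{Q/a}. -/
theorem stmt14 (a b Q : ℝ) (ha : 1 ≤ a) (hab : a < b) (hQ : 1 ≤ Q)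
    (h : ℝ → ℝ) (hcont : ContinuousOn h (Set.Icc a b))
    (hnonneg : ∀ p ∈ Set.Icc a b, 0 ≤ h p) (hpos : 0 < h a) :
    Tendsto
      (fun δ : ℝ => (∫ p in Set.Icc a b, δ ^ (Q / p) * h p) /
        ((h a * a ^ 2 / (Q * Real.log δ)) * δ ^ (Q / a)))
      atTop (nhds 1) := by
  have ha0 : (0:ℝ) < a := by linarith
  have hQ0 : (0:ℝ) < Q := by linarith
  have key := aux a b ha hab h hcont hnonneg hpos
  have hlog : Tendsto (fun δ : ℝ => Q * Real.log δ) atTop atTop :=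
    Tendsto.const_mul_atTop hQ0 Real.tendsto_log_atTop
  have hcomp := key.comp hlog
  refine Tendsto.congr' ?_ hcomp
  filter_upwards [eventually_gt_atTop 1] with δ hδ
  have hδ0 : (0:ℝ) < δ := by linarith
  have hnum : (∫ p in a..b, Real.exp ((Q * Real.log δ) / p) * h p)
      = ∫ p in Set.Icc a b, δ ^ (Q / p) * h p := by
    rw [intervalIntegral.integral_of_le hab.le, ← MeasureTheory.integral_Icc_eq_integral_Ioc]
    apply MeasureTheory.setIntegral_congr_fun measurableSet_Icc
    intro p hp
    have hp0 : 0 < p := lt_of_lt_of_le ha0 hp.1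
    show Real.exp (Q * Real.log δ / p) * h p = δ ^ (Q / p) * h p
    rw [Real.rpow_def_of_pos hδ0, mul_div_assoc', mul_comm (Real.log δ) Q]
  have hden : δ ^ (Q / a) = Real.exp ((Q * Real.log δ) / a) := by
    rw [Real.rpow_def_of_pos hδ0, mul_div_assoc', mul_comm (Real.log δ) Q]
  simp only [Function.comp_apply]
  rw [hnum, hden]
end

section
/- Let f ∈ G^{(Q)}_{μ,ν}(a,b) and g be measurable with ||g||_{Q'} = (∫_a^b |g|_{p'}^{Q'} ν(dp))^{1/Q'} < ∞, where ν is a probability measure on (a,b), Q > 1, Q' = Q/(Q-1), p' = p/(p-1). Then |∫_T f g dμ| ≤ ||f||_{G^{(Q)}_{μ,ν}} · ||g||_{Q'}. -/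
open MeasureTheory Real Set Filter

lemma memLp_of_integrable_abs_rpow {T : Type*} [MeasurableSpace T] {μ : Measure T} {f : T → ℝ}
    {p : ℝ} (hp : 0 < p) (hf : AEStronglyMeasurable f μ)
    (hint : Integrable (fun t => |f t| ^ p) μ) : MemLp f (ENNReal.ofReal p) μ := by
  have hq0 : ENNReal.ofReal p ≠ 0 := by simp [ENNReal.ofReal_eq_zero, not_le, hp]
  have h := (memLp_norm_rpow_iff (p := ENNReal.ofReal p) (q := ENNReal.ofReal p) hf hq0
    ENNReal.ofReal_ne_top)
  rw [ENNReal.div_self hq0 ENNReal.ofReal_ne_top] at h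
  apply h.1
  rw [memLp_one_iff_integrable]
  simpa [Real.norm_eq_abs, ENNReal.toReal_ofReal hp.le] using hint


/-- Hölder-type inequality in IGLS:
|∫ f g dμ| ≤ (∫_a^b |f|_p^Q ν(dp))^{1/Q} · (∫_a^b |g|_{p'}^{Q'} ν(dp))^{1/Q'}, where
ν is a probability measure on (a,b), Q' = Q/(Q-1) and p' = p/(p-1). -/
theorem stmt15 {T : Type*} [MeasurableSpace T] (μ : Measure T) [SigmaFinite μ]
    (a b Q : ℝ) (ha : 1 < a) (hab : a < b) (hQ : 1 < Q)
    (ν : Measure ℝ) [IsProbabilityMeasure ν] (hν : ν ((Set.Ioo a b)ᶜ) = 0)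
    (f g : T → ℝ) (hf : Measurable f) (hg : Measurable g)
    (hfg : Integrable (fun t => f t * g t) μ)
    (hfp : ∀ p ∈ Set.Ioo a b, Integrable (fun t => |f t| ^ p) μ)
    (hgp : ∀ p ∈ Set.Ioo a b, Integrable (fun t => |g t| ^ (p / (p - 1))) μ)
    (hFint : Integrable (fun p => (lpNorm μ p f) ^ Q) ν)
    (hGint : Integrable (fun p => (lpNorm μ (p / (p - 1)) g) ^ (Q / (Q - 1))) ν) :
    |∫ t, f t * g t ∂μ|
      ≤ (∫ p, (lpNorm μ p f) ^ Q ∂ν) ^ (1 / Q) *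
        (∫ p, (lpNorm μ (p / (p - 1)) g) ^ (Q / (Q - 1)) ∂ν) ^ ((Q - 1) / Q) := by
  set I := ∫ t, f t * g t ∂μ with hI
  set F : ℝ → ℝ := fun p => lpNorm μ p f with hF
  set G : ℝ → ℝ := fun p => lpNorm μ (p / (p - 1)) g with hG
  have hQQ' : Q.HolderConjugate (Q / (Q - 1)) :=
    (Real.holderConjugate_iff_eq_conjExponent hQ).2 rfl
  have hFnn : ∀ p, 0 ≤ F p := fun p =>
    Real.rpow_nonneg (integral_nonneg fun t => Real.rpow_nonneg (abs_nonneg _) _) _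
  have hGnn : ∀ p, 0 ≤ G p := fun p =>
    Real.rpow_nonneg (integral_nonneg fun t => Real.rpow_nonneg (abs_nonneg _) _) _
  -- pointwise Hölder in μ
  have h1 : ∀ p ∈ Set.Ioo a b, |I| ≤ F p * G p := by
    intro p hp
    have hp1 : 1 < p := ha.trans hp.1
    have hpq : p.HolderConjugate (p / (p - 1)) :=
      (Real.holderConjugate_iff_eq_conjExponent hp1).2 rfl
    have hfm : MemLp f (ENNReal.ofReal p) μ :=
      memLp_of_integrable_abs_rpow hpq.pos hf.aestronglyMeasurable (hfp p hp)
    have hgm : MemLp g (ENNReal.ofReal (p / (p - 1))) μ :=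
      memLp_of_integrable_abs_rpow hpq.symm.pos hg.aestronglyMeasurable (hgp p hp)
    have key := integral_mul_norm_le_Lp_mul_Lq (μ := μ) hpq hfm hgm
    have habs : |I| ≤ ∫ t, ‖f t * g t‖ ∂μ := by
      rw [← Real.norm_eq_abs]
      exact norm_integral_le_integral_norm _
    calc |I| ≤ ∫ t, ‖f t * g t‖ ∂μ := habs
      _ = ∫ t, ‖f t‖ * ‖g t‖ ∂μ := by simp [norm_mul]
      _ ≤ (∫ t, ‖f t‖ ^ p ∂μ) ^ (1 / p) * (∫ t, ‖g t‖ ^ (p / (p - 1)) ∂μ) ^ (1 / (p / (p - 1))) :=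
        key
      _ = F p * G p := by simp [hF, hG, _root_.lpNorm, Real.norm_eq_abs]
  have hmem : ∀ᵐ p ∂ν, p ∈ Set.Ioo a b := by rw [ae_iff]; exact hν
  -- a.e. measurability of F and G
  have rpow_inv_eq : ∀ (c : ℝ), 1 < c → ∀ (h : ℝ → ℝ), (∀ p, 0 ≤ h p) →
      (fun p => ((h p) ^ c) ^ (1 / c)) = h := by
    intro c hc h hh
    funext p
    rw [← Real.rpow_mul (hh p), mul_one_div, div_self (ne_of_gt (lt_trans zero_lt_one hc)),
      Real.rpow_one]
  have hFm : AEStronglyMeasurable F ν := by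
    have h3 := (Real.continuous_rpow_const
      (le_of_lt (by positivity : (0:ℝ) < 1 / Q))).comp_aestronglyMeasurable
      hFint.aestronglyMeasurable
    rwa [rpow_inv_eq Q hQ F hFnn] at h3
  have hGm : AEStronglyMeasurable G ν := by
    have h3 := (Real.continuous_rpow_const
      hQQ'.symm.one_div_nonneg).comp_aestronglyMeasurable
      hGint.aestronglyMeasurable
    rwa [rpow_inv_eq (Q / (Q - 1)) hQQ'.symm.lt G hGnn] at h3
  -- MemLp of F and G over ν
  have hFmem : MemLp F (ENNReal.ofReal Q) ν := by
    refine memLp_of_integrable_abs_rpow hQQ'.pos hFm ?_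
    simpa only [abs_of_nonneg (hFnn _)] using hFint
  have hGmem : MemLp G (ENNReal.ofReal (Q / (Q - 1))) ν := by
    refine memLp_of_integrable_abs_rpow hQQ'.symm.pos hGm ?_
    simpa only [abs_of_nonneg (hGnn _)] using hGint
  -- integrability of F * G
  have hFG : Integrable (fun p => F p * G p) ν := by
    have hpqr : (1 : ENNReal) / 1 = 1 / ENNReal.ofReal Q + 1 / ENNReal.ofReal (Q / (Q - 1)) := by
      simp [one_div, hQQ'.inv_add_inv_ennreal]
    haveI : ENNReal.HolderTriple (ENNReal.ofReal Q) (ENNReal.ofReal (Q / (Q - 1))) 1 :=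
      ⟨by simpa [one_div] using hpqr.symm⟩
    have := (hGmem.smul hFmem : MemLp (F • G) 1 ν)
    rw [memLp_one_iff_integrable] at this
    exact this
  -- step 2: |I| ≤ ∫ F * G
  have h2 : |I| ≤ ∫ p, F p * G p ∂ν := by
    have : |I| = ∫ _, |I| ∂ν := by simp
    rw [this]
    refine integral_mono_ae (integrable_const _) hFG ?_
    filter_upwards [hmem] with p hp using h1 p hp
  -- step 3: Hölder in ν
  have h3 : ∫ p, F p * G p ∂ν ≤
      (∫ p, F p ^ Q ∂ν) ^ (1 / Q) * (∫ p, G p ^ (Q / (Q - 1)) ∂ν) ^ (1 / (Q / (Q - 1))) :=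
    integral_mul_le_Lp_mul_Lq_of_nonneg hQQ'
      (Eventually.of_forall hFnn) (Eventually.of_forall hGnn) hFmem hGmem
  have hdiv : 1 / (Q / (Q - 1)) = (Q - 1) / Q := one_div_div _ _
  rw [hdiv] at h3
  exact h2.trans h3
end
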